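/- For the Butcher table of Table 1 applied as a Lawson scheme (SLRK6) to the scalar test equation ẋ = λ₁x + λ₂x: with z₁ = hλ₁, z₂ = hλ₂, the Lawson stages U i = exp(c i · z₂) · u₀ + Σ_{j<i} a(i,j) · exp((c i − c j) · z₂) · (z₁ · U j) and the update u⁺ = exp(z₂) · u₀ + Σ_i b i · exp((1 − c i) · z₂) · (z₁ · U i) satisfy u⁺ = e^{z₂} · (1 + z₁ + z₁²/2! + z₁³/3! + z₁⁴/4! + z₁⁵/5! + z₁⁶/6! + (29/178200) z₁⁷) · u₀ for all λ₁, λ₂, h, u₀ ∈ ℂ. -/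

import Mathlib

/-! Lawson's change of variables `Vᵢ = e^{-cᵢ z₂} Uᵢ` absorbs the exact exponentials and turns
the scheme into the underlying explicit Runge–Kutta method applied to `ẏ = λ₁ y`:
`V = u₀ 𝟙 + z₁ A V` and `u⁺ = e^{z₂} (u₀ + z₁ bᵀV)`. As `A` is strictly lower triangular it is
nilpotent, so `V = Σₖ z₁ᵏ Aᵏ 𝟙 u₀` and `u⁺ = e^{z₂} (1 + Σₖ (bᵀAᵏ𝟙) z₁ᵏ⁺¹) u₀`. For Table 1 the
weights `bᵀAᵏ𝟙` are `1/(k+1)!` for `k ≤ 5` and `29/178200` for `k = 6`, while `A⁷𝟙 = 0`. -/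

open Finset Complex

/-- Coefficient matrix of Table 1, regarded as complex numbers. -/
noncomputable def a : Fin 8 → Fin 8 → ℂ :=
  !![0,      0,      0,      0,     0,      0,      0,     0;
     1/6,    0,      0,      0,     0,      0,      0,     0;
     1/12,   1/12,   0,      0,     0,      0,      0,     0;
     0,      -4/33,  5/11,   0,     0,      0,      0,     0;
     -1/4,   -29/44, 31/22,  0,     0,      0,      0,     0;
     3/11,   8/33,   -4/11,  1/11,  14/33,  0,      0,     0;
     -17/48, -5/12,  1,      1,     -13/12, 11/16,  0,     0;
     20/39,  12/39,  -31/39, -1/39, 34/39,  -11/39, 16/39, 0]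

/-- Weights of Table 1 regarded as complex numbers. -/
noncomputable def b : Fin 8 → ℂ := ![13/200, 0, 4/25, 11/40, 0, 11/40, 4/25, 13/200]

/-- Abscissae of Table 1. -/
noncomputable def c : Fin 8 → ℂ := fun i => ∑ j, a i j

open Matrix

section Nilpotent

variable {R : Type*} [Semiring R] {s : ℕ}

theorem pow_apply_eq_zero_of_strictLowerTriangular {A : Matrix (Fin s) (Fin s) R}
    (hA : ∀ i j, ¬ j < i → A i j = 0) (k : ℕ) (i j : Fin s) (hij : (i : ℕ) < j + k) :
    (A ^ k) i j = 0 := by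
  induction k generalizing j with
  | zero => exact one_apply_ne (by rintro rfl; simp at hij)
  | succ k ih =>
    rw [pow_succ, mul_apply]
    refine sum_eq_zero fun l _ => ?_
    by_cases hjl : j < l
    · rw [ih l (by omega), zero_mul]
    · rw [hA l j hjl, mul_zero]

theorem pow_eq_zero_of_strictLowerTriangular {A : Matrix (Fin s) (Fin s) R}
    (hA : ∀ i j, ¬ j < i → A i j = 0) : A ^ s = 0 := by
  ext i j
  exact pow_apply_eq_zero_of_strictLowerTriangular hA s i j (by omega)

end Nilpotent

section Neumann

variable {ι R : Type*} [Fintype ι] [DecidableEq ι] [CommSemiring R]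

theorem eq_add_pow_mulVec_of_eq_add_mulVec {M : Matrix ι ι R} {v w : ι → R}
    (hv : v = w + M *ᵥ v) (n : ℕ) :
    v = ∑ k ∈ range n, M ^ k *ᵥ w + M ^ n *ᵥ v := by
  induction n with
  | zero => simp
  | succ n ih =>
    calc v = ∑ k ∈ range n, M ^ k *ᵥ w + M ^ n *ᵥ (w + M *ᵥ v) := by rwa [← hv]
      _ = _ := by rw [mulVec_add, mulVec_mulVec, ← pow_succ, sum_range_succ, add_assoc]

theorem eq_sum_pow_mulVec_of_eq_add_mulVec {M : Matrix ι ι R} {n : ℕ} (hM : M ^ n = 0)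
    {v w : ι → R} (hv : v = w + M *ᵥ v) :
    v = ∑ k ∈ range n, M ^ k *ᵥ w := by
  simpa [hM] using eq_add_pow_mulVec_of_eq_add_mulVec hv n

theorem add_mul_dotProduct_eq_of_eq_add_smul_mulVec {A : Matrix ι ι R} {n : ℕ} (hA : A ^ n = 0)
    (b : ι → R) (z u₀ : R) {V : ι → R} (hV : V = u₀ • 1 + z • (A *ᵥ V)) :
    u₀ + z * b ⬝ᵥ V = (1 + ∑ k ∈ range n, b ⬝ᵥ (A ^ k *ᵥ 1) * z ^ (k + 1)) * u₀ := by
  have hzA : (z • A) ^ n = 0 := by rw [smul_pow, hA, smul_zero]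
  rw [← smul_mulVec] at hV
  rw [eq_sum_pow_mulVec_of_eq_add_mulVec hzA hV, dotProduct_sum, mul_sum, add_mul, sum_mul]
  congr 1
  · ring
  refine sum_congr rfl fun k _ => ?_
  rw [smul_pow, smul_mulVec, mulVec_smul, dotProduct_smul, dotProduct_smul]
  simp only [smul_eq_mul]
  ring

end Neumann

theorem sum_filter_lt_eq_mulVec {ι R : Type*} [Fintype ι] [LT ι] [DecidableLT ι]
    [NonUnitalNonAssocSemiring R] {A : Matrix ι ι R} (hA : ∀ i j, ¬ j < i → A i j = 0)
    (v : ι → R) (i : ι) :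
    ∑ j ∈ univ.filter (· < i), A i j * v j = (A *ᵥ v) i :=
  sum_filter_of_ne fun j _ hj => by_contra fun hji => hj (by rw [hA i j hji, zero_mul])

theorem lawson_row_eq {ι : Type*} (S : Finset ι) (α c U : ι → ℂ) (γ z₁ z₂ u₀ : ℂ) :
    exp (γ * z₂) * u₀ + ∑ j ∈ S, α j * exp ((γ - c j) * z₂) * (z₁ * U j) =
      exp (γ * z₂) * (u₀ + z₁ * ∑ j ∈ S, α j * (exp (-(c j * z₂)) * U j)) := by
  rw [mul_add, mul_sum, mul_sum]
  congr 1
  refine sum_congr rfl fun j _ => ?_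
  rw [sub_mul, sub_eq_add_neg, exp_add]
  ring

noncomputable def aPowMulVecOne : ℕ → Fin 8 → ℂ
  | 0 => 1
  | 1 => ![0, 1/6, 1/6, 1/3, 1/2, 2/3, 5/6, 1]
  | 2 => ![0, 0, 1/72, 1/18, 1/8, 2/9, 25/72, 1/2]
  | 3 => ![0, 0, 0, 5/792, 31/1584, 7/132, 25/288, 55/312]
  | 4 => ![0, 0, 0, 0, 0, 29/3267, 205/9504, 145/3861]
  | 5 => ![0, 0, 0, 0, 0, 0, 29/4752, 49/7722]
  | 6 => ![0, 0, 0, 0, 0, 0, 0, 29/11583]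
  | _ + 7 => 0

theorem of_a_apply_eq_zero_of_not_lt (i j : Fin 8) (hji : ¬ j < i) : of a i j = 0 := by
  rw [of_apply]
  fin_cases i <;> fin_cases j <;> simp_all [a]

theorem of_a_mulVec_aPowMulVecOne (k : ℕ) :
    of a *ᵥ aPowMulVecOne k = aPowMulVecOne (k + 1) := by
  rcases k with _ | _ | _ | _ | _ | _ | _ | k
  all_goals
    ext i
    simp only [aPowMulVecOne, mulVec, dotProduct, Fin.sum_univ_eight, of_apply]
    fin_cases i <;> simp [a] <;> norm_num

theorem of_a_pow_mulVec_one (k : ℕ) : of a ^ k *ᵥ 1 = aPowMulVecOne k := by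
  induction k with
  | zero => rw [pow_zero, one_mulVec, aPowMulVecOne]
  | succ k ih => rw [pow_succ', ← mulVec_mulVec, ih, of_a_mulVec_aPowMulVecOne]

theorem table1_stabilityPoly (z : ℂ) :
    1 + ∑ k ∈ range 8, b ⬝ᵥ (of a ^ k *ᵥ 1) * z ^ (k + 1) =
      1 + z + z ^ 2 / (Nat.factorial 2 : ℂ) + z ^ 3 / (Nat.factorial 3 : ℂ)
         + z ^ 4 / (Nat.factorial 4 : ℂ) + z ^ 5 / (Nat.factorial 5 : ℂ)
         + z ^ 6 / (Nat.factorial 6 : ℂ) + (29 / 178200) * z ^ 7 := by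
  simp only [of_a_pow_mulVec_one, sum_range_succ, sum_range_zero, aPowMulVecOne, dotProduct,
    Fin.sum_univ_eight]
  simp [b, Nat.factorial]
  ring

theorem SLRK6_stability_general
    (u₀ : ℂ) (z₁ z₂ : ℂ)
    (U : Fin 8 → ℂ)
    (hU : ∀ i, U i = Complex.exp (c i * z₂) * u₀ +
      ∑ j ∈ Finset.univ.filter (fun j => j < i),
        a i j * Complex.exp ((c i - c j) * z₂) * (z₁ * U j))
    (uplus : ℂ)
    (huplus : uplus = Complex.exp z₂ * u₀ +
      ∑ i, b i * Complex.exp ((1 - c i) * z₂) * (z₁ * U i)) :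
    uplus = Complex.exp z₂ *
      (1 + z₁ + z₁ ^ 2 / (Nat.factorial 2 : ℂ) + z₁ ^ 3 / (Nat.factorial 3 : ℂ)
         + z₁ ^ 4 / (Nat.factorial 4 : ℂ) + z₁ ^ 5 / (Nat.factorial 5 : ℂ)
         + z₁ ^ 6 / (Nat.factorial 6 : ℂ) + (29 / 178200) * z₁ ^ 7) * u₀ := by
  let V : Fin 8 → ℂ := fun j => exp (-(c j * z₂)) * U j
  have hUV (i : Fin 8) : U i = exp (c i * z₂) * V i := by
    rw [← mul_assoc, ← exp_add, add_neg_cancel, exp_zero, one_mul]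
  have hstages : V = u₀ • 1 + z₁ • (of a *ᵥ V) := by
    funext i
    have hi := hU i
    rw [lawson_row_eq, hUV i] at hi
    rw [mul_left_cancel₀ (exp_ne_zero _) hi]
    simp only [Pi.add_apply, Pi.smul_apply, Pi.one_apply, smul_eq_mul, mul_one]
    rw [← sum_filter_lt_eq_mulVec of_a_apply_eq_zero_of_not_lt]
    rfl
  have hupdate : uplus = exp z₂ * (u₀ + z₁ * b ⬝ᵥ V) := by
    have hrow := lawson_row_eq univ b c U 1 z₁ z₂ u₀
    rw [one_mul] at hrow
    rw [huplus, hrow]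
    rfl
  rw [hupdate, add_mul_dotProduct_eq_of_eq_add_smul_mulVec
    (pow_eq_zero_of_strictLowerTriangular of_a_apply_eq_zero_of_not_lt) b z₁ u₀ hstages,
    table1_stabilityPoly, mul_assoc]

/-- applying Table 1 as a Lawson scheme (SLRK6) to the test equation
`ẋ = λ₁x + λ₂x`, the update satisfies
`u⁺ = e^{z₂}(1 + z₁ + z₁²/2! + z₁³/3! + z₁⁴/4! + z₁⁵/5! + z₁⁶/6! + (29/178200) z₁⁷) u₀`. -/
theorem SLRK6_stability
    (lam₁ lam₂ h u₀ : ℂ) (z₁ z₂ : ℂ) (hz₁ : z₁ = h * lam₁) (hz₂ : z₂ = h * lam₂)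
    (U : Fin 8 → ℂ)
    (hU : ∀ i, U i = Complex.exp (c i * z₂) * u₀ +
      ∑ j ∈ Finset.univ.filter (fun j => j < i),
        a i j * Complex.exp ((c i - c j) * z₂) * (z₁ * U j))
    (uplus : ℂ)
    (huplus : uplus = Complex.exp z₂ * u₀ +
      ∑ i, b i * Complex.exp ((1 - c i) * z₂) * (z₁ * U i)) :
    uplus = Complex.exp z₂ *
      (1 + z₁ + z₁ ^ 2 / (Nat.factorial 2 : ℂ) + z₁ ^ 3 / (Nat.factorial 3 : ℂ)
         + z₁ ^ 4 / (Nat.factorial 4 : ℂ) + z₁ ^ 5 / (Nat.factorial 5 : ℂ)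
         + z₁ ^ 6 / (Nat.factorial 6 : ℂ) + (29 / 178200) * z₁ ^ 7) * u₀ :=
  SLRK6_stability_general u₀ z₁ z₂ U hU uplus huplus
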